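/- Let A be a type with a distinguished element 0 and a binary operation foo : A → A → A, and define h : ℕ → ℕ → A by h x y = 0 if x = 0 or y = 0, and h x y = foo (h (x−1) y) (h x (y−1)) otherwise. Consider the iterative computation that starts from the array state H₀ : ℕ → A with H₀ j = 0 for all j, and for i = 1, …, M produces H_i from H_{i−1} by setting, for j = 1, …, N in increasing order of j, H[j] := foo(H[j], H[j−1]) (the entry at index 0 is never written and remains 0). Then for every 0 ≤ i ≤ M and every 1 ≤ j ≤ N, H_i j = h i j; in particular the final array satisfies H_M j = h M j, so the loop nest REX computes the recurrence H. -/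

import Mathlib

/-- The two-dimensional recurrence `h x y = 0` if `x = 0` or `y = 0`, and
`h x y = foo (h (x-1) y) (h x (y-1))` otherwise. -/
def rexH {A : Type*} [Zero A] (foo : A → A → A) : ℕ → ℕ → A
  | 0, _ => 0
  | _ + 1, 0 => 0
  | x + 1, y + 1 => foo (rexH foo x (y + 1)) (rexH foo (x + 1) y)
  termination_by x y => (x, y)

/-- One row of the REX loop: starting from the array state `H`, perform the
updates `H[j] := foo (H[j], H[j-1])` for `j = 1, …, jmax` in increasing order
of `j` (index `0` is never written). -/
def rexRow {A : Type*} (foo : A → A → A) (H : ℕ → A) : ℕ → (ℕ → A)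
  | 0 => H
  | j + 1 =>
    Function.update (rexRow foo H j) (j + 1)
      (foo (rexRow foo H j (j + 1)) (rexRow foo H j j))

/-- The array state `H_i` after `i` iterations of the outer loop of REX with
inner loop bound `N`, starting from the all-zero array `H₀`. -/
def rexState {A : Type*} [Zero A] (foo : A → A → A) (N : ℕ) : ℕ → (ℕ → A)
  | 0 => fun _ => 0
  | i + 1 => rexRow foo (rexState foo N i) N

/-!
Since `h i 0 = 0`, the invariant "`H_i j = h i j` for all `j ≤ N`" also covers the
never-written cell `0`. Sweeping row `i + 1` from left to right, cell `j + 1` still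
holds the old value `h i (j + 1)` when it is overwritten, while cell `j` already holds
the new value `h (i + 1) j`; so the update `foo (H[j+1], H[j])` is exactly the
recurrence.
-/

section Recurrence

variable {A : Type*} [Zero A] (foo : A → A → A)

lemma rexH_zero_left (y : ℕ) : rexH foo 0 y = 0 := by
  rw [rexH]

lemma rexH_zero_right (x : ℕ) : rexH foo x 0 = 0 := by
  cases x <;> rw [rexH]

lemma rexH_succ_succ (x y : ℕ) :
    rexH foo (x + 1) (y + 1) = foo (rexH foo x (y + 1)) (rexH foo (x + 1) y) := by
  rw [rexH]

end Recurrence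

section Row

variable {A : Type*} (foo : A → A → A) (H : ℕ → A)

lemma rexRow_of_lt {k j : ℕ} (hkj : k < j) : rexRow foo H k j = H j := by
  induction k with
  | zero => rfl
  | succ k ih =>
    rw [rexRow, Function.update_of_ne (by omega), ih (by omega)]

lemma rexRow_eq_of_le (r : ℕ → A) {k : ℕ} (h_zero : r 0 = H 0)
    (h_succ : ∀ j < k, r (j + 1) = foo (H (j + 1)) (r j)) :
    ∀ j ≤ k, rexRow foo H k j = r j := by
  induction k with
  | zero =>
    intro j hj
    obtain rfl : j = 0 := by omega
    exact h_zero.symm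
  | succ k ih =>
    have ih' := ih fun j hj => h_succ j (by omega)
    intro j hj
    rcases eq_or_lt_of_le hj with rfl | hjk
    · rw [rexRow, Function.update_self, rexRow_of_lt foo H (Nat.lt_succ_self k),
        ih' k le_rfl, h_succ k (Nat.lt_succ_self k)]
    · rw [rexRow, Function.update_of_ne hjk.ne, ih' j (by omega)]

end Row

lemma rexState_eq_rexH {A : Type*} [Zero A] (foo : A → A → A) (N : ℕ) :
    ∀ i, ∀ j ≤ N, rexState foo N i j = rexH foo i j := by
  intro i
  induction i with
  | zero => intro j _; exact (rexH_zero_left foo j).symm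
  | succ i ih =>
    refine rexRow_eq_of_le foo _ _ ?_ ?_
    · rw [ih 0 (Nat.zero_le N), rexH_zero_right, rexH_zero_right]
    · intro j hj
      rw [rexH_succ_succ, ih (j + 1) hj]

/-- The loop nest REX computes the recurrence `h`: for every `0 ≤ i ≤ M` and
every `1 ≤ j ≤ N`, the array state after `i` outer iterations satisfies
`H_i j = h i j`; in particular the final array satisfies `H_M j = h M j`. -/
theorem rex_computes_recurrence {A : Type*} [Zero A] (foo : A → A → A)
    (M N : ℕ) :
    (∀ i : ℕ, i ≤ M → ∀ j : ℕ, 1 ≤ j → j ≤ N →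
      rexState foo N i j = rexH foo i j) ∧
    (∀ j : ℕ, 1 ≤ j → j ≤ N → rexState foo N M j = rexH foo M j) :=
  ⟨fun i _ j _ hjN => rexState_eq_rexH foo N i j hjN,
    fun j _ hjN => rexState_eq_rexH foo N M j hjN⟩
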